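/- Let H₀ be a complex Hilbert space, B ∈ B(H₀) with 0 ≤ B ≤ I and ker B = ker(I−B) = {0}, and let P and Q be the orthogonal projections of H = H₀ ⊕ H₀ onto N = {(u, Bu) : u ∈ H₀} and M = {(u, −Bu) : u ∈ H₀}, respectively. Then for all unit vectors x₁, y₂ ∈ H₀, setting x = (x₁, 0) and y = (0, y₂), one has ‖P^⊥x‖² + ‖Py‖² ≥ (1/4)‖By₂‖² and ‖Q^⊥x‖² + ‖Qy‖² ≥ (1/4)‖By₂‖²; consequently ‖(I−L)x‖² + ‖Ly‖² ≥ (1/4)‖By₂‖² for every L ∈ {0, P, Q, I}. -/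

import Mathlib

/-!
For `L = P, Q` the term `‖L y‖²` alone suffices: the first component of `L y` is `G (±B y₂)`,
and since `0 ≤ B ≤ 1` forces `‖B‖ ≤ 1`, hence `‖1 + B²‖ ≤ 2`, the inverse `G = (1 + B²)⁻¹`
satisfies `‖G w‖ ≥ ‖w‖ / 2`. For `L = 0, 1` the bound is `‖B y₂‖ ≤ 1 = ‖x‖ = ‖y‖`.
-/

noncomputable section

variable {H₀ : Type*} [NormedAddCommGroup H₀] [InnerProductSpace ℂ H₀] [CompleteSpace H₀]

/-- The operator on `H₀ ⊕ H₀ = WithLp 2 (H₀ × H₀)` given by the block matrix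
`[[A, B], [C, D]]`. -/
def blk (A B C D : H₀ →L[ℂ] H₀) : WithLp 2 (H₀ × H₀) →L[ℂ] WithLp 2 (H₀ × H₀) :=
  (((WithLp.prodContinuousLinearEquiv 2 ℂ H₀ H₀).symm :
      H₀ × H₀ →L[ℂ] WithLp 2 (H₀ × H₀)) ∘L ((A.coprod B).prod (C.coprod D))) ∘L
    ((WithLp.prodContinuousLinearEquiv 2 ℂ H₀ H₀) : WithLp 2 (H₀ × H₀) →L[ℂ] H₀ × H₀)

/-- The vector `(u, v) ∈ H₀ ⊕ H₀`. -/
def vec₂ (u v : H₀) : WithLp 2 (H₀ × H₀) := (WithLp.equiv 2 (H₀ × H₀)).symm (u, v)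

section BlockOperators

variable {V : Type*} [NormedAddCommGroup V] [InnerProductSpace ℂ V]

lemma blk_apply (A B C D : V →L[ℂ] V) (u v : V) :
    blk A B C D (vec₂ u v) = vec₂ (A u + B v) (C u + D v) := rfl

lemma blk_diag_mul_blk_apply_vec₂_zero_left (G A B C D : V →L[ℂ] V) (v : V) :
    (blk G 0 0 G * blk A B C D) (vec₂ 0 v) = vec₂ (G (B v)) (G (D v)) := by
  simp [blk_apply]

end BlockOperators

lemma sq_norm_vec₂ {V : Type*} [SeminormedAddCommGroup V] (u v : V) :
    ‖vec₂ u v‖ ^ 2 = ‖u‖ ^ 2 + ‖v‖ ^ 2 :=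
  WithLp.prod_norm_sq_eq_of_L2 _

lemma sq_norm_le_sq_norm_vec₂_left {V : Type*} [SeminormedAddCommGroup V] (u v : V) :
    ‖u‖ ^ 2 ≤ ‖vec₂ u v‖ ^ 2 := by
  rw [sq_norm_vec₂]; exact le_add_of_nonneg_right (sq_nonneg _)

theorem ContinuousLinearMap.IsPositive.norm_le_one {E : Type*} [NormedAddCommGroup E]
    [InnerProductSpace ℂ E] [CompleteSpace E] {B : E →L[ℂ] E} (hB : B.IsPositive)
    (h1B : (1 - B).IsPositive) : ‖B‖ ≤ 1 := by
  rw [CStarAlgebra.norm_le_one_iff_of_nonneg B ((nonneg_iff_isPositive B).2 hB), ← sub_nonneg]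
  exact (nonneg_iff_isPositive _).2 h1B

section RightInverse

variable {𝕜 E : Type*} [NontriviallyNormedField 𝕜] [NormedAddCommGroup E] [NormedSpace 𝕜 E]

theorem norm_le_opNorm_mul_norm_apply_of_mul_eq_one {T G : E →L[𝕜] E} (h : T * G = 1) (w : E) :
    ‖w‖ ≤ ‖T‖ * ‖G w‖ :=
  calc ‖w‖ = ‖(T * G) w‖ := by rw [h, one_apply_eq_self]
    _ ≤ ‖T‖ * ‖G w‖ := T.le_opNorm (G w)

theorem norm_one_add_mul_self_le_two {B : E →L[𝕜] E} (hB : ‖B‖ ≤ 1) : ‖1 + B * B‖ ≤ 2 :=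
  calc ‖1 + B * B‖ ≤ ‖(1 : E →L[𝕜] E)‖ + ‖B‖ * ‖B‖ :=
        (norm_add_le _ _).trans (add_le_add_right (norm_mul_le _ _) _)
    _ ≤ 1 + 1 * 1 := by gcongr; exact ContinuousLinearMap.norm_id_le
    _ = 2 := by norm_num

theorem quarter_norm_sq_le_norm_sq_apply {B G : E →L[𝕜] E} (hB : ‖B‖ ≤ 1)
    (hG : (1 + B * B) * G = 1) (w : E) : 1 / 4 * ‖w‖ ^ 2 ≤ ‖G w‖ ^ 2 := by
  have h := (norm_le_opNorm_mul_norm_apply_of_mul_eq_one hG w).trans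
    (mul_le_mul_of_nonneg_right (norm_one_add_mul_self_le_two hB) (norm_nonneg _))
  nlinarith [norm_nonneg w]

end RightInverse

theorem norms_of_vector_functionals_stmt18_general
    (B : H₀ →L[ℂ] H₀) (hBpos : B.IsPositive) (hB1 : ((1 : H₀ →L[ℂ] H₀) - B).IsPositive)
    (G : H₀ →L[ℂ] H₀) (hG2 : (1 + B * B) * G = 1)
    (x₁ y₂ : H₀) (hx₁ : ‖x₁‖ = 1) (hy₂ : ‖y₂‖ = 1) :
    let P : WithLp 2 (H₀ × H₀) →L[ℂ] WithLp 2 (H₀ × H₀) :=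
      blk G 0 0 G * blk 1 B B (B * B)
    let Q : WithLp 2 (H₀ × H₀) →L[ℂ] WithLp 2 (H₀ × H₀) :=
      blk G 0 0 G * blk 1 (-B) (-B) (B * B)
    let x := vec₂ x₁ 0
    let y := vec₂ 0 y₂
    ‖x - P x‖ ^ 2 + ‖P y‖ ^ 2 ≥ 1 / 4 * ‖B y₂‖ ^ 2 ∧
    ‖x - Q x‖ ^ 2 + ‖Q y‖ ^ 2 ≥ 1 / 4 * ‖B y₂‖ ^ 2 ∧
    ∀ L ∈ ({0, P, Q, 1} : Set (WithLp 2 (H₀ × H₀) →L[ℂ] WithLp 2 (H₀ × H₀))),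
      ‖x - L x‖ ^ 2 + ‖L y‖ ^ 2 ≥ 1 / 4 * ‖B y₂‖ ^ 2 := by
  intro P Q x y
  have hB : ‖B‖ ≤ 1 := hBpos.norm_le_one hB1
  have hG : ∀ w, 1 / 4 * ‖w‖ ^ 2 ≤ ‖G w‖ ^ 2 := quarter_norm_sq_le_norm_sq_apply hB hG2
  have hBy : ‖B y₂‖ ≤ 1 := by simpa [hy₂] using B.le_of_opNorm_le hB y₂
  have hPy : 1 / 4 * ‖B y₂‖ ^ 2 ≤ ‖P y‖ ^ 2 := by
    rw [blk_diag_mul_blk_apply_vec₂_zero_left]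
    exact (hG _).trans (sq_norm_le_sq_norm_vec₂_left _ _)
  have hQy : 1 / 4 * ‖B y₂‖ ^ 2 ≤ ‖Q y‖ ^ 2 := by
    rw [blk_diag_mul_blk_apply_vec₂_zero_left, ← norm_neg (B y₂)]
    exact (hG _).trans (sq_norm_le_sq_norm_vec₂_left _ _)
  have hx : 1 / 4 * ‖B y₂‖ ^ 2 ≤ ‖x‖ ^ 2 := by
    rw [sq_norm_vec₂, hx₁]; nlinarith [norm_nonneg (B y₂)]
  have hy : 1 / 4 * ‖B y₂‖ ^ 2 ≤ ‖y‖ ^ 2 := by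
    rw [sq_norm_vec₂, hy₂]; nlinarith [norm_nonneg (B y₂)]
  have hP := le_add_of_nonneg_of_le (sq_nonneg ‖x - P x‖) hPy
  have hQ := le_add_of_nonneg_of_le (sq_nonneg ‖x - Q x‖) hQy
  refine ⟨hP, hQ, ?_⟩
  rintro L (rfl | rfl | rfl | rfl)
  · simpa using hx
  · exact hP
  · exact hQ
  · simpa using hy

/-- Let `B` be a positive contraction on `H₀` with
`ker B = ker (I−B) = {0}`, `G = (I+B²)⁻¹`, and let
`P = (G ⊕ G)·[[I, B], [B, B²]]` and `Q = (G ⊕ G)·[[I, −B], [−B, B²]]` be the orthogonal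
projections onto `N = {(u, Bu)}` and `M = {(u, −Bu)}`.  For unit vectors `x₁, y₂ ∈ H₀`
and `x = (x₁, 0)`, `y = (0, y₂)`, one has
`‖P^⊥x‖² + ‖Py‖² ≥ (1/4)‖By₂‖²` and `‖Q^⊥x‖² + ‖Qy‖² ≥ (1/4)‖By₂‖²`; consequently
`‖(I−L)x‖² + ‖Ly‖² ≥ (1/4)‖By₂‖²` for every `L ∈ {0, P, Q, I}`. -/
theorem norms_of_vector_functionals_stmt18
    (B : H₀ →L[ℂ] H₀) (hBpos : B.IsPositive) (hB1 : ((1 : H₀ →L[ℂ] H₀) - B).IsPositive)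
    (hkerB : LinearMap.ker (B : H₀ →ₗ[ℂ] H₀) = ⊥) (hker1B : LinearMap.ker (((1 : H₀ →L[ℂ] H₀) - B : H₀ →L[ℂ] H₀) : H₀ →ₗ[ℂ] H₀) = ⊥)
    (G : H₀ →L[ℂ] H₀) (hG1 : G * (1 + B * B) = 1) (hG2 : (1 + B * B) * G = 1)
    (x₁ y₂ : H₀) (hx₁ : ‖x₁‖ = 1) (hy₂ : ‖y₂‖ = 1) :
    let P : WithLp 2 (H₀ × H₀) →L[ℂ] WithLp 2 (H₀ × H₀) :=
      blk G 0 0 G * blk 1 B B (B * B)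
    let Q : WithLp 2 (H₀ × H₀) →L[ℂ] WithLp 2 (H₀ × H₀) :=
      blk G 0 0 G * blk 1 (-B) (-B) (B * B)
    let x := vec₂ x₁ 0
    let y := vec₂ 0 y₂
    ‖x - P x‖ ^ 2 + ‖P y‖ ^ 2 ≥ 1 / 4 * ‖B y₂‖ ^ 2 ∧
    ‖x - Q x‖ ^ 2 + ‖Q y‖ ^ 2 ≥ 1 / 4 * ‖B y₂‖ ^ 2 ∧
    ∀ L ∈ ({0, P, Q, 1} : Set (WithLp 2 (H₀ × H₀) →L[ℂ] WithLp 2 (H₀ × H₀))),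
      ‖x - L x‖ ^ 2 + ‖L y‖ ^ 2 ≥ 1 / 4 * ‖B y₂‖ ^ 2 :=
  norms_of_vector_functionals_stmt18_general B hBpos hB1 G hG2 x₁ y₂ hx₁ hy₂
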